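/- arXiv:2309.04330 — 2 statements merged into one kernel-verified Lean document; each statement's English description precedes it below -/
import Mathlib

section
/- For every p > 1 there exists a constant C_p > 0 such that for all t ∈ (0,1], ∫_{-π}^{π} |G(t,y)|^{p/(p-1)} dy ≤ C_p · t^{-1/(2(p-1))}. -/
/-! Interpolation between `L¹` and `L^∞`: for `t > 0` the kernel `G(t,·)` is nonnegative with
total mass `√(2π)`, and for `t ≤ 1` it is bounded by `M t^{-1/2}`, so with `e = 1/(p-1)` we get
`∫ G^{1+e} ≤ (M t^{-1/2})^e ∫ G`. The sup bound compares `Σ e^{-k²t}` with the geometric series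
in `e^{-√t}`. Positivity is Jacobi's theta transformation: `G(t,x)` is, up to the factor
`1/√(2π)`, `HurwitzZeta.cosKernel (x/2π) (t/π)`, which the functional equation turns into a sum of
Gaussians. -/

open Real MeasureTheory

/-- The periodic heat kernel on `[-π, π]` used in the paper:
`G(t,x) = 1/√(2π) + Σ_{k=1}^∞ √(2/π) e^{-k² t} cos(k x)`. -/
noncomputable def G (t x : ℝ) : ℝ :=
  1 / Real.sqrt (2 * Real.pi) +
    ∑' k : ℕ, Real.sqrt (2 / Real.pi) * Real.exp (-((k : ℝ) + 1) ^ 2 * t) *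
      Real.cos (((k : ℝ) + 1) * x)

lemma exp_neg_succ_sq_mul_le {t : ℝ} (ht : 0 ≤ t) (k : ℕ) :
    exp (-((k : ℝ) + 1) ^ 2 * t) ≤ exp 4⁻¹ * exp (-√t) * exp (-√t) ^ k := by
  rw [← exp_nat_mul, ← exp_add, ← exp_add, exp_le_exp]
  nlinarith [sq_nonneg (((k : ℝ) + 1) * √t - 2⁻¹), sq_sqrt ht]

lemma summable_exp_neg_succ_sq_mul {t : ℝ} (ht : 0 < t) :
    Summable fun k : ℕ ↦ exp (-((k : ℝ) + 1) ^ 2 * t) :=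
  .of_nonneg_of_le (fun _ ↦ (exp_pos _).le) (exp_neg_succ_sq_mul_le ht.le)
    ((summable_geometric_of_lt_one (exp_pos _).le (exp_lt_one_iff.mpr (by simpa))).mul_left _)

lemma exp_neg_div_one_sub_exp_neg_le {s : ℝ} (hs : 0 < s) :
    exp (-s) / (1 - exp (-s)) ≤ 1 / s := by
  have hr : exp (-s) < 1 := exp_lt_one_iff.mpr (by linarith)
  have hexp : s + 1 ≤ exp s := add_one_le_exp s
  rw [div_le_div_iff₀ (by linarith) hs, one_mul, exp_neg]
  field_simp
  linarith

lemma tsum_exp_neg_succ_sq_mul_le {t : ℝ} (ht : 0 < t) :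
    ∑' k : ℕ, exp (-((k : ℝ) + 1) ^ 2 * t) ≤ exp 4⁻¹ / √t := by
  have hs : 0 < √t := sqrt_pos.mpr ht
  have hr : exp (-√t) < 1 := exp_lt_one_iff.mpr (by linarith)
  calc ∑' k : ℕ, exp (-((k : ℝ) + 1) ^ 2 * t)
      ≤ ∑' k : ℕ, exp 4⁻¹ * exp (-√t) * exp (-√t) ^ k :=
        (summable_exp_neg_succ_sq_mul ht).tsum_le_tsum (exp_neg_succ_sq_mul_le ht.le)
          ((summable_geometric_of_lt_one (exp_pos _).le hr).mul_left _)
    _ = exp 4⁻¹ * (exp (-√t) / (1 - exp (-√t))) := by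
        rw [tsum_mul_left, tsum_geometric_of_lt_one (exp_pos _).le hr, mul_assoc, div_eq_mul_inv]
    _ ≤ exp 4⁻¹ / √t :=
        (mul_le_mul_of_nonneg_left (exp_neg_div_one_sub_exp_neg_le hs)
          (exp_pos _).le).trans_eq (mul_one_div _ _)

lemma norm_exp_mul_cos_le (a b : ℝ) : ‖exp a * cos b‖ ≤ exp a := by
  rw [norm_mul, norm_of_nonneg (exp_pos a).le]
  exact mul_le_of_le_one_right (exp_pos a).le (abs_cos_le_one b)

lemma G_eq_tsum (t x : ℝ) :
    G t x = 1 / √(2 * π) +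
      √(2 / π) * ∑' k : ℕ, exp (-((k : ℝ) + 1) ^ 2 * t) * cos (((k : ℝ) + 1) * x) := by
  simp only [G, mul_assoc, tsum_mul_left]

lemma continuous_tsum_exp_mul_cos {t : ℝ} (ht : 0 < t) :
    Continuous fun x ↦ ∑' k : ℕ, exp (-((k : ℝ) + 1) ^ 2 * t) * cos (((k : ℝ) + 1) * x) :=
  continuous_tsum (fun _ ↦ by fun_prop) (summable_exp_neg_succ_sq_mul ht)
    fun _ _ ↦ norm_exp_mul_cos_le _ _

lemma continuous_G {t : ℝ} (ht : 0 < t) : Continuous (G t) := by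
  simp only [funext (G_eq_tsum t)]
  exact continuous_const.add (continuous_const.mul (continuous_tsum_exp_mul_cos ht))

lemma abs_tsum_exp_mul_cos_le {t : ℝ} (ht : 0 < t) (x : ℝ) :
    |∑' k : ℕ, exp (-((k : ℝ) + 1) ^ 2 * t) * cos (((k : ℝ) + 1) * x)| ≤ exp 4⁻¹ / √t :=
  (tsum_of_norm_bounded (summable_exp_neg_succ_sq_mul ht).hasSum
    fun _ ↦ norm_exp_mul_cos_le _ _).trans (tsum_exp_neg_succ_sq_mul_le ht)

lemma abs_G_le {t : ℝ} (ht : 0 < t) (ht1 : t ≤ 1) (x : ℝ) :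
    |G t x| ≤ (1 / √(2 * π) + √(2 / π) * exp 4⁻¹) / √t := by
  have hs1 : √t ≤ 1 := sqrt_le_one.mpr ht1
  have hconst : 1 / √(2 * π) ≤ 1 / √(2 * π) / √t :=
    le_div_self (by positivity) (sqrt_pos.mpr ht) hs1
  rw [G_eq_tsum, add_div, mul_div_assoc]
  refine (abs_add_le _ _).trans (add_le_add ?_ ?_)
  · rwa [abs_of_nonneg (by positivity)]
  · rw [abs_mul, abs_of_nonneg (sqrt_nonneg _)]
    exact mul_le_mul_of_nonneg_left (abs_tsum_exp_mul_cos_le ht x) (sqrt_nonneg _)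

lemma integral_cos_nat_succ_mul (k : ℕ) : ∫ y in -π..π, cos (((k : ℝ) + 1) * y) = 0 := by
  have hsin : sin (((k : ℝ) + 1) * π) = 0 := by exact_mod_cast sin_nat_mul_pi (k + 1)
  rw [intervalIntegral.integral_comp_mul_left (fun y ↦ cos y) (by positivity), integral_cos,
    mul_neg, sin_neg, hsin]
  simp

lemma integral_tsum_exp_mul_cos {t : ℝ} (ht : 0 < t) :
    ∫ y in -π..π, ∑' k : ℕ, exp (-((k : ℝ) + 1) ^ 2 * t) * cos (((k : ℝ) + 1) * y) = 0 := by
  have hterms : HasSum (fun k : ℕ ↦ ∫ y in -π..π, exp (-((k : ℝ) + 1) ^ 2 * t) *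
      cos (((k : ℝ) + 1) * y)) (∫ y in -π..π, ∑' k : ℕ, exp (-((k : ℝ) + 1) ^ 2 * t) *
        cos (((k : ℝ) + 1) * y)) :=
    intervalIntegral.hasSum_integral_of_dominated_convergence
      (fun k _ ↦ exp (-((k : ℝ) + 1) ^ 2 * t))
      (fun _ ↦ (by fun_prop : Continuous _).aestronglyMeasurable)
      (fun _ ↦ .of_forall fun _ _ ↦ norm_exp_mul_cos_le _ _)
      (.of_forall fun _ _ ↦ summable_exp_neg_succ_sq_mul ht) intervalIntegrable_const
      (.of_forall fun y _ ↦ ((summable_exp_neg_succ_sq_mul ht).of_norm_bounded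
        fun _ ↦ norm_exp_mul_cos_le _ _).hasSum)
  simp only [intervalIntegral.integral_const_mul, integral_cos_nat_succ_mul, mul_zero] at hterms
  exact hterms.unique hasSum_zero

lemma integral_G {t : ℝ} (ht : 0 < t) : ∫ y in -π..π, G t y = √(2 * π) := by
  simp only [G_eq_tsum]
  rw [intervalIntegral.integral_add intervalIntegrable_const
    ((continuous_tsum_exp_mul_cos ht).intervalIntegrable _ _ |>.const_mul _),
    intervalIntegral.integral_const_mul, integral_tsum_exp_mul_cos ht,
    intervalIntegral.integral_const, smul_eq_mul, mul_zero, add_zero, sub_neg_eq_add, ← two_mul,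
    mul_one_div, div_eq_iff (by positivity), mul_self_sqrt (by positivity)]

open HurwitzZeta in
lemma HurwitzZeta.cosKernel_nonneg (a : UnitAddCircle) {s : ℝ} (hs : 0 < s) :
    0 ≤ cosKernel a s := by
  induction a using QuotientAddGroup.induction_on with | H a =>
  have hθ : 0 ≤ evenKernel a (1 / s) :=
    (hasSum_int_evenKernel a (one_div_pos.mpr hs)).nonneg fun _ ↦ (exp_pos _).le
  rw [evenKernel_functional_equation, one_div_one_div] at hθ
  exact nonneg_of_mul_nonneg_right hθ (by positivity)

lemma hasSum_exp_mul_cos {t : ℝ} (ht : 0 < t) (x : ℝ) :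
    HasSum (fun k : ℕ ↦ exp (-((k : ℝ) + 1) ^ 2 * t) * cos (((k : ℝ) + 1) * x))
      ((HurwitzZeta.cosKernel (x / (2 * π)) (t / π) - 1) / 2) := by
  refine ((HurwitzZeta.hasSum_nat_cosKernel₀ _ (div_pos ht pi_pos)).div_const 2).congr_fun
    fun k ↦ ?_
  have hfreq : 2 * π * (x / (2 * π)) * (k + 1) = (k + 1) * x := by field_simp
  have hdecay : -π * ((k : ℝ) + 1) ^ 2 * (t / π) = -((k : ℝ) + 1) ^ 2 * t := by field_simp
  rw [hfreq, hdecay]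
  ring

lemma G_eq_cosKernel {t : ℝ} (ht : 0 < t) (x : ℝ) :
    G t x = HurwitzZeta.cosKernel (x / (2 * π)) (t / π) / √(2 * π) := by
  have hsqrt : √(2 / π) = 2 / √(2 * π) := by
    rw [eq_div_iff (by positivity), ← sqrt_mul (by positivity)]
    rw [show 2 / π * (2 * π) = 2 ^ 2 by field_simp, sqrt_sq zero_le_two]
  simp only [G, mul_assoc, tsum_mul_left, (hasSum_exp_mul_cos ht x).tsum_eq, hsqrt]
  field_simp
  ring

lemma G_nonneg {t : ℝ} (ht : 0 < t) (x : ℝ) : 0 ≤ G t x := by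
  rw [G_eq_cosKernel ht]
  exact div_nonneg (HurwitzZeta.cosKernel_nonneg _ (div_pos ht pi_pos)) (sqrt_nonneg _)

lemma integral_abs_G {t : ℝ} (ht : 0 < t) : ∫ y in -π..π, |G t y| = √(2 * π) := by
  simp only [abs_of_nonneg (G_nonneg ht _), integral_G ht]

lemma intervalIntegral_abs_rpow_le {f : ℝ → ℝ} {a b B e : ℝ} (hab : a ≤ b) (he : 0 ≤ e)
    (hf : Continuous f) (hfB : ∀ x ∈ Set.Icc a b, |f x| ≤ B) :
    ∫ x in a..b, |f x| ^ (e + 1) ≤ B ^ e * ∫ x in a..b, |f x| := by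
  rw [← intervalIntegral.integral_const_mul]
  refine intervalIntegral.integral_mono_on hab
    ((hf.abs.rpow_const fun _ ↦ Or.inr (by linarith)).intervalIntegrable _ _)
    ((continuous_const.mul hf.abs).intervalIntegrable _ _) fun x hx ↦ ?_
  rw [rpow_add_one' (abs_nonneg _) (by linarith)]
  exact mul_le_mul_of_nonneg_right
    (rpow_le_rpow (abs_nonneg _) (hfB x hx) he) (abs_nonneg _)

/-- `L^{p/(p-1)}` estimate on the periodic heat kernel. -/
theorem stmt_7 (p : ℝ) (hp : 1 < p) :
    ∃ C > (0 : ℝ), ∀ t ∈ Set.Ioc (0 : ℝ) 1,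
      (∫ y in (-Real.pi)..Real.pi, |G t y| ^ (p / (p - 1))) ≤
        C * t ^ (-(1 / (2 * (p - 1)))) := by
  have hp1 : p - 1 ≠ 0 := by linarith
  set e := 1 / (p - 1) with he
  have he_pos : 0 < e := one_div_pos.mpr (by linarith)
  have hq : p / (p - 1) = e + 1 := by rw [he]; field_simp; ring
  set M := 1 / √(2 * π) + √(2 / π) * exp 4⁻¹
  refine ⟨√(2 * π) * M ^ e, by positivity, fun t ⟨ht, ht1⟩ ↦ ?_⟩
  calc ∫ y in -π..π, |G t y| ^ (p / (p - 1))
      ≤ (M / √t) ^ e * ∫ y in -π..π, |G t y| := by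
        rw [hq]
        exact intervalIntegral_abs_rpow_le (by linarith [pi_pos]) he_pos.le (continuous_G ht)
          fun y _ ↦ abs_G_le ht ht1 y
    _ = √(2 * π) * M ^ e * t ^ (-(1 / (2 * (p - 1)))) := by
        rw [integral_abs_G ht, div_rpow (by positivity) (sqrt_nonneg _), sqrt_eq_rpow,
          ← rpow_mul ht.le, rpow_neg ht.le, he]
        field_simp
end

section
/- Let φ : ℝ → ℝ be a continuous 2π-periodic function. Then (2π)^{-1/2} ∫_{-π}^{π} G(t, x - y) φ(y) dy converges to φ(x), uniformly in x ∈ ℝ, as t → 0⁺. -/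
open Real MeasureTheory

/-!
Writing `√(2π) G(t,x) = ∑_{n ∈ ℤ} e^{-n²t} e^{inx}`, the operator
`f ↦ (2π)^{-1/2} ∫_{-π}^{π} G(t, x - y) f(y) dy` multiplies the Fourier mode `e^{iny}` by
`e^{-n²t}`, so it converges uniformly to the identity on trigonometric polynomials. Jacobi's
transformation formula rewrites the same series as a periodized Gaussian, so `G ≥ 0`; with
`∫ G(t, x - y) dy = √(2π)` this makes every such operator a contraction for the sup norm, and the
density of trigonometric polynomials among continuous periodic functions concludes. Real `φ` are
handled through their complex embedding.
-/

namespace PeriodicHeat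

open Complex Filter Function Topology

noncomputable def heatMode (t x : ℝ) (n : ℤ) : ℂ := cexp (-(n : ℂ) ^ 2 * t + n * x * I)

lemma norm_heatMode (t x : ℝ) (n : ℤ) : ‖heatMode t x n‖ = rexp (-n ^ 2 * t) := by
  rw [heatMode, Complex.norm_exp]
  congr 1
  simp [pow_two]

lemma heatMode_eq_exp_mul_exp (t x : ℝ) (n : ℤ) :
    heatMode t x n = rexp (-n ^ 2 * t) * cexp (n * x * I) := by
  rw [heatMode, ofReal_exp, ← Complex.exp_add]
  push_cast
  rfl

lemma heatMode_eq_jacobiTheta₂_term (t x : ℝ) (n : ℤ) :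
    heatMode t x n = jacobiTheta₂_term n (x / (2 * π)) (I * t / π) := by
  rw [heatMode, jacobiTheta₂_term]
  congr 1
  field_simp
  ring_nf
  rw [I_sq]
  ring

lemma summable_heatMode {t : ℝ} (ht : 0 < t) (x : ℝ) : Summable (heatMode t x) := by
  refine ((summable_jacobiTheta₂_term_iff _ _).mpr ?_).congr
    fun n => (heatMode_eq_jacobiTheta₂_term t x n).symm
  simp [ht, Real.pi_pos]

lemma summable_exp_neg_sq_mul {t : ℝ} (ht : 0 < t) :
    Summable fun n : ℤ => rexp (-n ^ 2 * t) := by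
  simpa [norm_heatMode] using (summable_heatMode ht 0).norm

lemma heatMode_add_heatMode_neg (t x : ℝ) (n : ℤ) :
    heatMode t x n + heatMode t x (-n) =
      ((2 * rexp (-n ^ 2 * t) * Real.cos (n * x) : ℝ) : ℂ) := by
  simp only [heatMode, Int.cast_neg, neg_sq, Complex.exp_add]
  push_cast
  rw [Complex.cos, neg_mul, neg_mul]
  ring

lemma sqrt_two_pi_mul_sqrt_two_div_pi : √(2 * π) * √(2 / π) = 2 := by
  rw [← Real.sqrt_mul (by positivity), show 2 * π * (2 / π) = 2 ^ 2 by field_simp,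
    Real.sqrt_sq zero_le_two]

lemma hasSum_heatMode {t : ℝ} (ht : 0 < t) (x : ℝ) :
    HasSum (heatMode t x) ((√(2 * π) * G t x : ℝ) : ℂ) := by
  have hs := summable_heatMode ht x
  have hpos : Summable fun k : ℕ => heatMode t x (k + 1) :=
    hs.comp_injective fun a b h => by simpa using h
  have hneg : Summable fun k : ℕ => heatMode t x (-(k + 1)) :=
    hs.comp_injective fun a b h => by simpa using h
  convert hpos.hasSum.of_add_one_of_neg_add_one hneg.hasSum using 1
  rw [add_right_comm, ← hpos.tsum_add hneg]
  simp_rw [heatMode_add_heatMode_neg]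
  rw [← ofReal_tsum, G, mul_add, ← tsum_mul_left]
  have h0 : heatMode t x 0 = 1 := by simp [heatMode]
  rw [h0, mul_one_div_cancel (by positivity), ofReal_add, ofReal_one, add_comm]
  congr 2
  refine tsum_congr fun k => ?_
  push_cast
  rw [← mul_assoc, ← mul_assoc, sqrt_two_pi_mul_sqrt_two_div_pi]

lemma tsum_heatMode_eq_tsum_gaussian {t : ℝ} (ht : 0 < t) (x : ℝ) :
    ∑' n, heatMode t x n =
      ((1 / (t / π) ^ (1 / 2 : ℝ) *
        ∑' n : ℤ, rexp (-(π ^ 2 / t) * (n - x / (2 * π)) ^ 2) : ℝ) : ℂ) := by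
  have ha : 0 < ((t / π : ℝ) : ℂ).re := by simpa using div_pos ht Real.pi_pos
  have jacobi := Complex.tsum_exp_neg_quadratic ha (I * x / (2 * π))
  have hπ : (π : ℂ) ≠ 0 := ofReal_ne_zero.mpr Real.pi_ne_zero
  have ht' : (t : ℂ) ≠ 0 := ofReal_ne_zero.mpr ht.ne'
  convert jacobi using 1
  · refine tsum_congr fun n => ?_
    rw [heatMode]
    congr 1
    push_cast
    field_simp
  · rw [ofReal_mul, ofReal_tsum, ofReal_div, ofReal_one, ofReal_cpow (div_pos ht Real.pi_pos).le]
    push_cast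
    congr 1
    refine tsum_congr fun n => ?_
    congr 1
    field_simp
    ring_nf
    simp only [I_sq, I_pow_four]
    ring

lemma G_nonneg {t : ℝ} (ht : 0 < t) (x : ℝ) : 0 ≤ G t x := by
  have h := ofReal_injective <|
    (hasSum_heatMode ht x).tsum_eq.symm.trans (tsum_heatMode_eq_tsum_gaussian ht x)
  have : 0 ≤ √(2 * π) * G t x := h ▸ by positivity
  exact (mul_nonneg_iff_of_pos_left (by positivity)).mp this

lemma continuous_G {t : ℝ} (ht : 0 < t) : Continuous (G t) := by
  have hsum : Summable fun k : ℕ => √(2 / π) * rexp (-((k : ℝ) + 1) ^ 2 * t) := by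
    refine ((summable_exp_neg_sq_mul ht).comp_injective (i := fun k : ℕ => (k + 1 : ℤ))
      fun a b h => by simpa using h).mul_left (√(2 / π)) |>.congr fun k => ?_
    simp
  refine continuous_const.add (continuous_tsum (fun k => by fun_prop) hsum fun k x => ?_)
  rw [norm_mul, Real.norm_of_nonneg (by positivity)]
  exact mul_le_of_le_one_right (by positivity) (Real.abs_cos_le_one _)

lemma integral_exp_int_mul_I (k : ℤ) :
    ∫ y in (-π)..π, cexp (k * y * I) = if k = 0 then (2 * π : ℂ) else 0 := by
  split_ifs with hk
  · simp [hk]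
    ring
  · have hkI : (k : ℂ) * I ≠ 0 := mul_ne_zero (Int.cast_ne_zero.mpr hk) I_ne_zero
    simp_rw [mul_right_comm _ _ I]
    have hperiod : (k : ℂ) * I * π = k * I * (-π : ℝ) + k * (2 * π * I) := by push_cast; ring
    rw [integral_exp_mul_complex hkI, hperiod, Complex.exp_add, exp_int_mul_two_pi_mul_I, mul_one,
      sub_self, zero_div]

lemma norm_exp_int_mul_I (n : ℤ) (y : ℝ) : ‖cexp (n * y * I)‖ = 1 := by
  rw [← ofReal_intCast, ← ofReal_mul, norm_exp_ofReal_mul_I]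

lemma heatMode_sub_mul_exp (t x y : ℝ) (n m : ℤ) :
    heatMode t (x - y) n * cexp (m * y * I) = heatMode t x n * cexp ((m - n : ℤ) * y * I) := by
  simp only [heatMode, ← Complex.exp_add]
  congr 1
  push_cast
  ring

lemma integral_G_mul_exp {t : ℝ} (ht : 0 < t) (x : ℝ) (m : ℤ) :
    ∫ y in (-π)..π, ((√(2 * π) * G t (x - y) : ℝ) : ℂ) * cexp (m * y * I) =
      2 * π * heatMode t x m := by
  have termwise := intervalIntegral.hasSum_integral_of_dominated_convergence
    (F := fun n y => heatMode t (x - y) n * cexp (m * y * I)) (μ := volume) (a := -π) (b := π)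
    (fun n _ => rexp (-n ^ 2 * t))
    (fun n => (by unfold heatMode; fun_prop : Continuous _).aestronglyMeasurable)
    (fun n => ae_of_all _ fun y _ => by
      rw [norm_mul, norm_heatMode, norm_exp_int_mul_I, mul_one])
    (ae_of_all _ fun _ _ => summable_exp_neg_sq_mul ht) intervalIntegrable_const
    (ae_of_all _ fun y _ => (hasSum_heatMode ht (x - y)).mul_right _)
  have integral_term (n : ℤ) : ∫ y in (-π)..π, heatMode t (x - y) n * cexp (m * y * I) =
      if n = m then 2 * π * heatMode t x m else 0 := by
    simp_rw [heatMode_sub_mul_exp, intervalIntegral.integral_const_mul, integral_exp_int_mul_I,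
      sub_eq_zero, eq_comm (a := m)]
    split_ifs with h
    · rw [h, mul_comm]
    · rw [mul_zero]
  simp_rw [integral_term] at termwise
  exact termwise.unique (hasSum_ite_eq m _)

lemma continuous_G_sub {t : ℝ} (ht : 0 < t) (x : ℝ) : Continuous fun y => G t (x - y) :=
  (continuous_G ht).comp (continuous_const.sub continuous_id)

lemma rpow_neg_half_mul_sqrt {a : ℝ} (ha : 0 < a) : a ^ (-(1 / 2) : ℝ) * √a = 1 := by
  rw [Real.rpow_neg ha.le, Real.sqrt_eq_rpow, inv_mul_cancel₀ (by positivity)]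

section HeatFlow

variable {E : Type*} [NormedAddCommGroup E] [NormedSpace ℝ E]

noncomputable def heatFlow (t : ℝ) (f : ℝ → E) (x : ℝ) : E :=
  (2 * π) ^ (-(1 / 2) : ℝ) • ∫ y in (-π)..π, G t (x - y) • f y

lemma ofReal_heatFlow (t : ℝ) (f : ℝ → ℝ) (x : ℝ) :
    ((heatFlow t f x : ℝ) : ℂ) = heatFlow t (fun y => (f y : ℂ)) x := by
  simp only [heatFlow, smul_eq_mul, Complex.real_smul, ofReal_mul,
    ← intervalIntegral.integral_ofReal]

lemma heatFlow_exp {t : ℝ} (ht : 0 < t) (x : ℝ) (m : ℤ) :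
    heatFlow t (fun y => cexp (m * y * I)) x = heatMode t x m := by
  have hsqrt : ((√(2 * π) : ℝ) : ℂ) ≠ 0 := ofReal_ne_zero.mpr (by positivity)
  have h : ∫ y in (-π)..π, (G t (x - y) : ℂ) * cexp (m * y * I) =
      √(2 * π) * heatMode t x m := by
    refine mul_left_cancel₀ hsqrt ?_
    rw [← intervalIntegral.integral_const_mul]
    simp_rw [← mul_assoc, ← ofReal_mul]
    rw [integral_G_mul_exp ht x m, Real.mul_self_sqrt (by positivity)]
    push_cast
    ring
  rw [heatFlow, Complex.real_smul]
  simp_rw [Complex.real_smul]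
  rw [h, ← mul_assoc, ← ofReal_mul, rpow_neg_half_mul_sqrt (by positivity), ofReal_one, one_mul]

lemma heatFlow_one {t : ℝ} (ht : 0 < t) (x : ℝ) : heatFlow t (fun _ => (1 : ℝ)) x = 1 :=
  ofReal_injective <| by
    rw [ofReal_heatFlow, ofReal_one]
    simpa [heatMode] using heatFlow_exp ht x 0

lemma norm_heatFlow_le {t : ℝ} (ht : 0 < t) {f : ℝ → E} {M : ℝ}
    (hM : ∀ y, ‖f y‖ ≤ M) (x : ℝ) : ‖heatFlow t f x‖ ≤ M := by
  have hA : 0 ≤ (2 * π) ^ (-(1 / 2) : ℝ) := by positivity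
  calc ‖heatFlow t f x‖
      = (2 * π) ^ (-(1 / 2) : ℝ) * ‖∫ y in (-π)..π, G t (x - y) • f y‖ := by
        rw [heatFlow, norm_smul, Real.norm_of_nonneg hA]
    _ ≤ (2 * π) ^ (-(1 / 2) : ℝ) * ∫ y in (-π)..π, G t (x - y) * M := by
        gcongr
        refine intervalIntegral.norm_integral_le_of_norm_le (by linarith [pi_pos])
          (ae_of_all _ fun y _ => ?_)
          (((continuous_G_sub ht x).mul continuous_const).intervalIntegrable _ _)
        rw [norm_smul, Real.norm_of_nonneg (G_nonneg ht _)]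
        exact mul_le_mul_of_nonneg_left (hM y) (G_nonneg ht _)
    _ = heatFlow t (fun _ => (1 : ℝ)) x * M := by
        rw [heatFlow, intervalIntegral.integral_mul_const]
        simp [mul_assoc]
    _ = M := by rw [heatFlow_one ht, one_mul]

lemma heatFlow_sub {t : ℝ} (ht : 0 < t) {f g : ℝ → E} (hf : Continuous f)
    (hg : Continuous g) (x : ℝ) :
    heatFlow t (f - g) x = heatFlow t f x - heatFlow t g x := by
  simp only [heatFlow, Pi.sub_apply, smul_sub]
  rw [← smul_sub, ← intervalIntegral.integral_sub (f := fun y => G t (x - y) • f y)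
    (g := fun y => G t (x - y) • g y) (((continuous_G_sub ht x).smul hf).intervalIntegrable _ _)
    (((continuous_G_sub ht x).smul hg).intervalIntegrable _ _)]

end HeatFlow

lemma heatFlow_trigPoly {t : ℝ} (ht : 0 < t) (s : Finset ℤ) (c : ℤ → ℂ) (x : ℝ) :
    heatFlow t (fun y => ∑ n ∈ s, c n * cexp (n * y * I)) x =
      ∑ n ∈ s, c n * heatMode t x n := by
  simp_rw [← heatFlow_exp ht x, heatFlow, Complex.real_smul, Finset.mul_sum]
  rw [intervalIntegral.integral_finsetSum
    (f := fun n y => (G t (x - y) : ℂ) * (c n * cexp (n * y * I))) fun n _ =>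
      ((continuous_ofReal.comp (continuous_G_sub ht x)).mul (by fun_prop)).intervalIntegrable _ _,
    Finset.mul_sum]
  refine Finset.sum_congr rfl fun n _ => ?_
  simp_rw [mul_left_comm _ (c n), intervalIntegral.integral_const_mul]
  rw [mul_left_comm]

lemma tendstoUniformly_heatFlow_trigPoly (s : Finset ℤ) (c : ℤ → ℂ) :
    TendstoUniformly (fun t => heatFlow t fun y => ∑ n ∈ s, c n * cexp (n * y * I))
      (fun y => ∑ n ∈ s, c n * cexp (n * y * I)) (𝓝[>] 0) := by
  set Q : ℝ → ℝ := fun t => ∑ n ∈ s, ‖c n‖ * |1 - rexp (-n ^ 2 * t)|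
  have hQ : Tendsto Q (𝓝[>] 0) (𝓝 0) := by
    have hQc : Continuous Q := by fun_prop
    simpa [Q] using (hQc.tendsto 0).mono_left nhdsWithin_le_nhds
  rw [Metric.tendstoUniformly_iff]
  intro ε hε
  filter_upwards [hQ.eventually (gt_mem_nhds hε), self_mem_nhdsWithin] with t hQt ht x
  rw [dist_eq_norm, heatFlow_trigPoly ht, ← Finset.sum_sub_distrib]
  refine (norm_sum_le _ _).trans_lt (lt_of_le_of_lt (Finset.sum_le_sum fun n _ => ?_) hQt)
  rw [heatMode_eq_exp_mul_exp, ← mul_sub, ← one_sub_mul, norm_mul, norm_mul, norm_exp_int_mul_I,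
    mul_one, ← ofReal_one, ← ofReal_sub, norm_real, Real.norm_eq_abs]

lemma exists_trigPoly_dist_lt {f : ℝ → ℂ} (hf : Continuous f) (hper : Periodic f (2 * π))
    {ε : ℝ} (hε : 0 < ε) :
    ∃ (s : Finset ℤ) (c : ℤ → ℂ), ∀ x, dist (f x) (∑ n ∈ s, c n * cexp (n * x * I)) < ε := by
  have : Fact (0 < 2 * π) := ⟨by positivity⟩
  let F : C(AddCircle (2 * π), ℂ) := ⟨hper.lift, continuous_coinduced_dom.mpr hf⟩
  have hF : F ∈ closure (Submodule.span ℂ (Set.range (fourier (T := 2 * π))) : Set _) := by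
    rw [← Submodule.topologicalClosure_coe, span_fourier_closure_eq_top]
    trivial
  obtain ⟨g, hg, hFg⟩ := Metric.mem_closure_iff.mp hF ε hε
  obtain ⟨c, rfl⟩ := Finsupp.mem_span_range_iff_exists_finsupp.mp hg
  refine ⟨c.support, c, fun x => (le_of_eq ?_).trans_lt
    ((ContinuousMap.dist_apply_le_dist (x : AddCircle (2 * π))).trans_lt hFg)⟩
  congr 1
  rw [Finsupp.sum, ContinuousMap.sum_apply]
  refine Finset.sum_congr rfl fun n _ => ?_
  rw [ContinuousMap.smul_apply, smul_eq_mul, fourier_coe_apply]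
  congr 2
  push_cast
  field_simp

theorem tendstoUniformly_heatFlow {f : ℝ → ℂ} (hf : Continuous f)
    (hper : Periodic f (2 * π)) : TendstoUniformly (fun t => heatFlow t f) f (𝓝[>] 0) := by
  rw [Metric.tendstoUniformly_iff]
  intro ε hε
  obtain ⟨s, c, hc⟩ := exists_trigPoly_dist_lt hf hper (by positivity : 0 < ε / 3)
  set P : ℝ → ℂ := fun y => ∑ n ∈ s, c n * cexp (n * y * I)
  have hP : Continuous P := by fun_prop
  filter_upwards [Metric.tendstoUniformly_iff.mp (tendstoUniformly_heatFlow_trigPoly s c)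
    (ε / 3) (by positivity), self_mem_nhdsWithin] with t hPt ht x
  have hfP : dist (heatFlow t P x) (heatFlow t f x) ≤ ε / 3 := by
    rw [dist_eq_norm, ← heatFlow_sub ht hP hf]
    refine norm_heatFlow_le ht (fun y => ?_) x
    rw [Pi.sub_apply, ← dist_eq_norm, dist_comm]
    exact (hc y).le
  calc dist (f x) (heatFlow t f x)
      ≤ dist (f x) (P x) + dist (P x) (heatFlow t P x) +
          dist (heatFlow t P x) (heatFlow t f x) := dist_triangle4 _ _ _ _
    _ < ε := by linarith [hc x, hPt x]

end PeriodicHeat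

/-- `(2π)^{-1/2} G(t,·)` is an approximate identity: convolution with a continuous
`2π`-periodic `φ` converges uniformly to `φ` as `t → 0⁺`. -/
theorem stmt_11 (φ : ℝ → ℝ) (hcont : Continuous φ)
    (hper : ∀ x, φ (x + 2 * Real.pi) = φ x) :
    TendstoUniformly
      (fun t : ℝ => fun x : ℝ =>
        (2 * Real.pi) ^ (-(1 / 2) : ℝ) * ∫ y in (-Real.pi)..Real.pi, G t (x - y) * φ y)
      φ (nhdsWithin 0 (Set.Ioi 0)) := by
  have hℂ := PeriodicHeat.tendstoUniformly_heatFlow (f := fun y => (φ y : ℂ)) (by fun_prop)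
    (fun x => congrArg Complex.ofReal (hper x))
  rw [Metric.tendstoUniformly_iff] at hℂ ⊢
  intro ε hε
  filter_upwards [hℂ ε hε] with t ht x
  have := ht x
  rwa [← PeriodicHeat.ofReal_heatFlow, Complex.isometry_ofReal.dist_eq] at this
end
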